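/- Let f : [a,b] → ℝ be continuous and integrable on [a,b] with 0 ≤ a < b, let k > 1, and suppose |f|^{k/(k-1)} is convex on [a,b]. Then for any fixed p, q > 0, ∫_a^b (x-a)^p (b-x)^q f(x) dx ≤ (b-a)^{p+q+1} 2^{-(k-1)/k} [β(kp+1, kq+1)]^{1/k} [|f(a)|^{k/(k-1)} + |f(b)|^{k/(k-1)}]^{(k-1)/k}. -/

import Mathlib

/-! Hölder's inequality with the conjugate exponents `k` and `k / (k - 1)` bounds the integral by
`(∫ w ^ k) ^ (1 / k) * (∫ |f| ^ (k / (k - 1))) ^ ((k - 1) / k)`, where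
`w x = (x - a) ^ p * (b - x) ^ q`. The substitution `x = a + (b - a) t` turns the first integral
into `(b - a) ^ (k p + k q + 1) * β (k p + 1, k q + 1)`, and the right half of the
Hermite–Hadamard inequality bounds the second by `(b - a) (g a + g b) / 2` for the convex
`g = |f| ^ (k / (k - 1))`. -/

open Real Set MeasureTheory intervalIntegral

noncomputable def beta (x y : ℝ) : ℝ := ∫ t in (0:ℝ)..1, t ^ (x-1) * (1-t) ^ (y-1)

theorem beta_nonneg (x y : ℝ) : 0 ≤ beta x y :=
  intervalIntegral.integral_nonneg zero_le_one fun _ ht ↦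
    mul_nonneg (rpow_nonneg ht.1 _) (rpow_nonneg (sub_nonneg.2 ht.2) _)

theorem integral_sub_rpow_mul_rpow_sub {a b : ℝ} (hab : a < b) (r s : ℝ) :
    ∫ x in a..b, (x - a) ^ r * (b - x) ^ s = (b - a) ^ (r + s + 1) * beta (r + 1) (s + 1) := by
  have hba : 0 < b - a := sub_pos.2 hab
  have hsub := smul_integral_comp_add_mul (fun x ↦ (x - a) ^ r * (b - x) ^ s) (a := 0) (b := 1)
    (b - a) a
  simp only [mul_zero, add_zero, mul_one, add_sub_cancel] at hsub
  have hscale : ∀ t ∈ uIcc (0 : ℝ) 1, (a + (b - a) * t - a) ^ r * (b - (a + (b - a) * t)) ^ s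
      = (b - a) ^ r * (b - a) ^ s * (t ^ (r + 1 - 1) * (1 - t) ^ (s + 1 - 1)) := by
    intro t ht
    rw [uIcc_of_le zero_le_one] at ht
    rw [show a + (b - a) * t - a = (b - a) * t by ring,
      show b - (a + (b - a) * t) = (b - a) * (1 - t) by ring,
      mul_rpow hba.le ht.1, mul_rpow hba.le (sub_nonneg.2 ht.2)]
    simp only [add_sub_cancel_right]
    ring
  rw [← hsub, smul_eq_mul, integral_congr hscale, intervalIntegral.integral_const_mul, beta,
    rpow_add hba, rpow_add hba, rpow_one]
  ring

theorem ConvexOn.le_secant {g : ℝ → ℝ} {a b x : ℝ} (hab : a < b)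
    (hg : ConvexOn ℝ (Icc a b) g) (hx : x ∈ Icc a b) :
    g x ≤ ((b - x) * g a + (x - a) * g b) / (b - a) := by
  have hba : 0 < b - a := sub_pos.2 hab
  have h := hg.2 (left_mem_Icc.2 hab.le) (right_mem_Icc.2 hab.le)
    (div_nonneg (sub_nonneg.2 hx.2) hba.le) (div_nonneg (sub_nonneg.2 hx.1) hba.le)
    (by field_simp; ring)
  have hx_eq : ((b - x) / (b - a)) • a + ((x - a) / (b - a)) • b = x := by
    simp only [smul_eq_mul]; field_simp; ring
  rw [hx_eq] at h
  simpa only [smul_eq_mul, add_div, mul_div_right_comm] using h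

theorem ConvexOn.integral_le_trapezoid {g : ℝ → ℝ} {a b : ℝ} (hab : a < b)
    (hg : ConvexOn ℝ (Icc a b) g) (hgi : IntervalIntegrable g volume a b) :
    ∫ x in a..b, g x ≤ (b - a) * (g a + g b) / 2 := by
  have hba : 0 < b - a := sub_pos.2 hab
  have hline : Continuous fun x ↦ ((b - x) * g a + (x - a) * g b) / (b - a) := by fun_prop
  calc ∫ x in a..b, g x ≤ ∫ x in a..b, ((b - x) * g a + (x - a) * g b) / (b - a) :=
        integral_mono_on hab.le hgi (hline.intervalIntegrable _ _) fun x hx ↦ hg.le_secant hab hx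
    _ = (b - a) * (g a + g b) / 2 := by
        rw [intervalIntegral.integral_div,
          intervalIntegral.integral_add ((by fun_prop : Continuous _).intervalIntegrable _ _)
            ((by fun_prop : Continuous _).intervalIntegrable _ _),
          intervalIntegral.integral_mul_const, intervalIntegral.integral_mul_const,
          integral_comp_sub_left (fun x ↦ x), integral_comp_sub_right (fun x ↦ x)]
        simp only [integral_id]
        field_simp
        ring

theorem ContinuousOn.memLp_restrict_of_subset_isCompact {X E : Type*} [TopologicalSpace X]
    [MeasurableSpace X] [OpensMeasurableSpace X] [NormedAddCommGroup E] {μ : Measure X}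
    [IsFiniteMeasureOnCompacts μ] {f : X → E} {s t : Set X} (hf : ContinuousOn f s)
    (hs : IsCompact s) (ht : MeasurableSet t) (hts : t ⊆ s) (p : ENNReal) :
    MemLp f p (μ.restrict t) := by
  have : IsFiniteMeasure (μ.restrict t) :=
    isFiniteMeasure_restrict.2 ((measure_mono hts).trans_lt hs.measure_lt_top).ne
  obtain ⟨C, hC⟩ := hs.exists_bound_of_continuousOn hf
  exact MemLp.of_bound (hf.aestronglyMeasurable_of_subset_isCompact hs ht hts) C
    ((ae_restrict_mem ht).mono fun x hx ↦ hC x (hts hx))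

theorem intervalIntegral.integral_mul_le_Lp_mul_Lq_of_continuousOn {a b p q : ℝ} (hab : a ≤ b)
    (hpq : p.HolderConjugate q) {f g : ℝ → ℝ} (hf : ContinuousOn f (Icc a b))
    (hg : ContinuousOn g (Icc a b)) :
    ∫ x in a..b, f x * g x
      ≤ (∫ x in a..b, |f x| ^ p) ^ (1 / p) * (∫ x in a..b, |g x| ^ q) ^ (1 / q) := by
  simp only [integral_of_le hab, ← Real.norm_eq_abs]
  calc ∫ x in Ioc a b, f x * g x ≤ ‖∫ x in Ioc a b, f x * g x‖ := Real.le_norm_self _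
    _ ≤ ∫ x in Ioc a b, ‖f x‖ * ‖g x‖ := by
        simpa only [norm_mul] using MeasureTheory.norm_integral_le_integral_norm fun x ↦ f x * g x
    _ ≤ _ :=
        integral_mul_norm_le_Lp_mul_Lq hpq
          (hf.memLp_restrict_of_subset_isCompact isCompact_Icc measurableSet_Ioc
            Ioc_subset_Icc_self _)
          (hg.memLp_restrict_of_subset_isCompact isCompact_Icc measurableSet_Ioc
            Ioc_subset_Icc_self _)

theorem integral_abs_sub_rpow_mul_rpow_sub_rpow {a b : ℝ} (hab : a < b) (p q k : ℝ) :
    ∫ x in a..b, |(x - a) ^ p * (b - x) ^ q| ^ k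
      = (b - a) ^ (k * p + k * q + 1) * beta (k * p + 1) (k * q + 1) := by
  rw [← integral_sub_rpow_mul_rpow_sub hab]
  refine integral_congr fun x hx ↦ ?_
  rw [uIcc_of_le hab.le] at hx
  have hxa : 0 ≤ x - a := sub_nonneg.2 hx.1
  have hbx : 0 ≤ b - x := sub_nonneg.2 hx.2
  rw [abs_of_nonneg (by positivity), mul_rpow (by positivity) (by positivity),
    ← rpow_mul hxa, ← rpow_mul hbx, mul_comm p, mul_comm q]

theorem rpow_weight_mul_rpow_trapezoid_eq {c B S k p q : ℝ} (hc : 0 < c) (hB : 0 ≤ B)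
    (hS : 0 ≤ S) (hk : k ≠ 0) :
    (c ^ (k * p + k * q + 1) * B) ^ (1 / k) * (c * S / 2) ^ (1 / (k / (k - 1)))
      = c ^ (p + q + 1) * 2 ^ (-((k - 1) / k)) * B ^ (1 / k) * S ^ ((k - 1) / k) := by
  have hexp : c ^ (p + q + 1) = c ^ ((k * p + k * q + 1) * (1 / k)) * c ^ ((k - 1) / k) := by
    rw [← rpow_add hc]; congr 1; field_simp; ring
  rw [one_div_div, mul_rpow (by positivity) hB, ← rpow_mul hc.le, mul_div_assoc,
    mul_rpow hc.le (by positivity), div_rpow hS zero_le_two, rpow_neg zero_le_two, hexp]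
  ring

theorem stmt8_general (a b p q : ℝ) (f : ℝ → ℝ)
    (hab : a < b) (hp : 0 < p) (hq : 0 < q)
    (hcont : ContinuousOn f (Set.Icc a b))
    (k : ℝ) (hk : 1 < k)
    (hf : ConvexOn ℝ (Set.Icc a b) (fun x => |f x| ^ (k/(k-1)))) :
    ∫ x in a..b, (x-a)^p * (b-x)^q * f x
      ≤ (b-a)^(p+q+1) * (2:ℝ)^(-((k-1)/k)) * (beta (k*p+1) (k*q+1))^(1/k)
          * (|f a| ^ (k/(k-1)) + |f b| ^ (k/(k-1))) ^ ((k-1)/k) := by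
  have hk' : 0 < k / (k - 1) := div_pos (zero_lt_one.trans hk) (sub_pos.2 hk)
  have hw : ContinuousOn (fun x ↦ (x - a) ^ p * (b - x) ^ q) (Icc a b) :=
    (((continuous_id.sub continuous_const).rpow_const fun _ ↦ Or.inr hp.le).mul
      ((continuous_const.sub continuous_id).rpow_const fun _ ↦ Or.inr hq.le)).continuousOn
  have htrap := hf.integral_le_trapezoid hab
    ((hcont.abs.rpow_const fun _ _ ↦ Or.inr hk'.le).intervalIntegrable_of_Icc hab.le)
  calc ∫ x in a..b, (x-a)^p * (b-x)^q * f x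
      ≤ (∫ x in a..b, |(x - a) ^ p * (b - x) ^ q| ^ k) ^ (1 / k)
          * (∫ x in a..b, |f x| ^ (k / (k - 1))) ^ (1 / (k / (k - 1))) :=
        integral_mul_le_Lp_mul_Lq_of_continuousOn hab.le (.conjExponent hk) hw hcont
    _ ≤ ((b - a) ^ (k * p + k * q + 1) * beta (k * p + 1) (k * q + 1)) ^ (1 / k)
          * ((b - a) * (|f a| ^ (k/(k-1)) + |f b| ^ (k/(k-1))) / 2) ^ (1 / (k / (k - 1))) := by
        rw [integral_abs_sub_rpow_mul_rpow_sub_rpow hab]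
        gcongr
        · exact rpow_nonneg (mul_nonneg (by positivity) (beta_nonneg _ _)) _
        · exact intervalIntegral.integral_nonneg hab.le fun x _ ↦ rpow_nonneg (abs_nonneg _) _
    _ = _ := rpow_weight_mul_rpow_trapezoid_eq (sub_pos.2 hab) (beta_nonneg _ _)
        (by positivity) (zero_lt_one.trans hk).ne'

theorem stmt8 (a b p q : ℝ) (f : ℝ → ℝ)
    (ha : 0 ≤ a) (hab : a < b) (hp : 0 < p) (hq : 0 < q)
    (hcont : ContinuousOn f (Set.Icc a b))
    (hint : IntervalIntegrable f volume a b)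
    (k : ℝ) (hk : 1 < k)
    (hf : ConvexOn ℝ (Set.Icc a b) (fun x => |f x| ^ (k/(k-1)))) :
    ∫ x in a..b, (x-a)^p * (b-x)^q * f x
      ≤ (b-a)^(p+q+1) * (2:ℝ)^(-((k-1)/k)) * (beta (k*p+1) (k*q+1))^(1/k)
          * (|f a| ^ (k/(k-1)) + |f b| ^ (k/(k-1))) ^ ((k-1)/k) :=
  stmt8_general a b p q f hab hp hq hcont k hk hf
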